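/- arXiv:1409.5074 — 3 statements merged into one kernel-verified Lean document; each statement's English description precedes it below -/
import Mathlib

section
/- Let V be a vector space over a field of characteristic 0, let I be a finite set, let (α_i)_{i∈I} be a family of vectors in V, let X ⊆ I, and let τ : I → I be a map with τ∘τ = id. Suppose w, t : V → V are linear maps satisfying: (i) t(α_i) = α_{τ(i)} for all i ∈ I; (ii) w∘w = id_V; (iii) w∘t = t∘w; (iv) w(α_i) − α_i lies in the linear span of {α_j : j ∈ X} for every i ∈ I; (v) w(v) = −t(v) for every v in the linear span of {α_j : j ∈ X}. Define the linear map Θ = −w∘t. Then for every i ∈ I one has Θ(α_{τ(i)}) − α_{τ(i)} = Θ(α_i) − α_i. -/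
/-- Lemma 3.1 (linear algebra content): for an "admissible pair" setup,
`Θ = -w ∘ t` satisfies `Θ(α_{τ i}) - α_{τ i} = Θ(α_i) - α_i`. -/
theorem stmt_0 {K V : Type*} [Field K] [CharZero K] [AddCommGroup V] [Module K V]
    {I : Type*} [Fintype I] (α : I → V) (X : Set I) (τ : I → I)
    (hτ : τ ∘ τ = id)
    (w t : V →ₗ[K] V)
    (ht : ∀ i, t (α i) = α (τ i))
    (hw2 : w ∘ₗ w = LinearMap.id)
    (hwt : w ∘ₗ t = t ∘ₗ w)
    (hspan : ∀ i, w (α i) - α i ∈ Submodule.span K (α '' X))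
    (hwX : ∀ v ∈ Submodule.span K (α '' X), w v = - t v) :
    ∀ i, (-(w ∘ₗ t)) (α (τ i)) - α (τ i) = (-(w ∘ₗ t)) (α i) - α i := by
  intro i
  have hττ : τ (τ i) = i := congrFun hτ i
  have key : w (w (α i) - α i) = - t (w (α i) - α i) := hwX _ (hspan i)
  have hw2' : w (w (α i)) = α i := by
    have := congrFun (congrArg DFunLike.coe hw2) (α i); simpa using this
  have hwt' : w (t (α i)) = t (w (α i)) := by
    have := congrFun (congrArg DFunLike.coe hwt) (α i); simpa using this
  simp only [LinearMap.neg_apply, LinearMap.comp_apply, map_sub, hw2', ht, hττ] at key ⊢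
  -- key : α i - w (α i) = -(t (w (α i)) - α (τ i))
  have h2 : w (α (τ i)) = t (w (α i)) := by rw [← ht, hwt']
  rw [h2]
  calc -w (α i) - α (τ i) = (α i - w (α i)) - α i - α (τ i) := by abel
    _ = (-(t (w (α i)) - α (τ i))) - α i - α (τ i) := by rw [key]
    _ = -t (w (α i)) - α i := by abel
end

section
/- Work in the field ℚ(q) of rational functions in one variable q over ℚ. For every integer m ≥ 1, one has ∑_{k=0}^{m} (−1)^k [m,k]_q · ( ∑_{l=0}^{m−k−1} q^{−(m−1)k − 2(m−1) + 2l} ) = q (q − q^{−1})^{−1} · ∏_{j=1}^{m} (1 − q^{−2j}). -/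
noncomputable def q : RatFunc ℚ := RatFunc.X

/-- The balanced Gaussian binomial coefficient `[m, k]_q` in `ℚ(q)`. -/
noncomputable def qbinom (m k : ℕ) : RatFunc ℚ :=
  ∏ j ∈ Finset.range k,
    (q ^ ((m : ℤ) - k + j + 1) - q ^ (-((m : ℤ) - k + j + 1))) /
      (q ^ ((j : ℤ) + 1) - q ^ (-((j : ℤ) + 1)))

/-!
Summing the inner geometric series and multiplying by `q² - 1` turns the double sum into
`q² F(-q^{-(m+1)}) - q^{-2(m-1)} F(-q^{-(m-1)})`, where by the q-binomial theorem
`F(x) = ∑ₖ [m,k]_q xᵏ = ∏_{j<m} (1 + q^{m-1-2j} x)`. The first product is `∏_{j=1}^m (1 - q^{-2j})`,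
and for `m ≥ 1` the second one contains the factor `1 - q⁰ = 0`.
-/

open Finset

lemma q_ne_zero : q ≠ 0 := RatFunc.X_ne_zero

lemma q_pow_ne_one {n : ℕ} (hn : n ≠ 0) : q ^ n ≠ 1 := by
  intro h
  have : (Polynomial.X : Polynomial ℚ) ^ n = 1 :=
    RatFunc.algebraMap_injective ℚ (by simpa [q] using h)
  simpa [hn] using congrArg Polynomial.natDegree this

/-- `(q - q⁻¹) [t]_q`; the normalising factors cancel in `qbinom`. -/
noncomputable def qNum (t : ℤ) : RatFunc ℚ := q ^ t - q ^ (-t)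

lemma qNum_natCast_add_one_ne_zero (n : ℕ) : qNum ((n : ℤ) + 1) ≠ 0 := by
  have h : q ^ ((n : ℤ) + 1) * qNum ((n : ℤ) + 1) = q ^ (2 * (n + 1)) - 1 := by
    rw [qNum, mul_sub, ← zpow_add₀ q_ne_zero, ← zpow_add₀ q_ne_zero, add_neg_cancel, zpow_zero,
      ← zpow_natCast]
    push_cast
    ring_nf
  intro h0
  rw [h0, mul_zero, eq_comm, sub_eq_zero] at h
  exact q_pow_ne_one (by omega) h

lemma qNum_add (a b : ℤ) : qNum (a + b) = q ^ (-a) * qNum b + q ^ b * qNum a := by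
  simp only [qNum, mul_sub, ← zpow_add₀ q_ne_zero]
  ring_nf

lemma qbinom_eq_prod (n k : ℕ) :
    qbinom n k = ∏ j ∈ range k, qNum ((n : ℤ) - k + j + 1) / qNum ((j : ℤ) + 1) := rfl

lemma qbinom_succ_mul (n k : ℕ) :
    qbinom n (k + 1) * qNum ((k : ℤ) + 1) = qbinom n k * qNum ((n : ℤ) - k) := by
  rw [qbinom_eq_prod, qbinom_eq_prod, prod_div_distrib, prod_div_distrib, prod_range_succ',
    prod_range_succ _ k]
  have hk : ∏ j ∈ range k, qNum ((j : ℤ) + 1) ≠ 0 :=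
    prod_ne_zero_iff.mpr fun j _ => qNum_natCast_add_one_ne_zero j
  have hk1 := qNum_natCast_add_one_ne_zero k
  push_cast
  field_simp
  congr 1
  · exact prod_congr rfl fun j _ => by ring_nf
  · ring_nf

lemma qbinom_succ_succ_mul (n k : ℕ) :
    qbinom (n + 1) (k + 1) * qNum ((k : ℤ) + 1) = qbinom n k * qNum ((n : ℤ) + 1) := by
  have hk1 := qNum_natCast_add_one_ne_zero k
  rw [qbinom_eq_prod, prod_range_succ, qbinom_eq_prod]
  push_cast
  field_simp
  congr 1
  · exact prod_congr rfl fun j _ => by ring_nf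
  · ring_nf

lemma qbinom_eq_zero_of_lt {n k : ℕ} (h : n < k) : qbinom n k = 0 := by
  rw [qbinom_eq_prod]
  refine prod_eq_zero (mem_range.mpr (show k - n - 1 < k by omega)) ?_
  rw [show (n : ℤ) - k + ((k - n - 1 : ℕ) : ℤ) + 1 = 0 by omega, qNum, neg_zero, sub_self,
    zero_div]

lemma qbinom_succ_succ (n k : ℕ) :
    qbinom (n + 1) (k + 1) =
      q ^ (-((k : ℤ) + 1)) * qbinom n (k + 1) + q ^ ((n : ℤ) - k) * qbinom n k := by
  refine mul_right_cancel₀ (qNum_natCast_add_one_ne_zero k) ?_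
  have hadd := qNum_add ((k : ℤ) + 1) ((n : ℤ) - k)
  rw [show (k : ℤ) + 1 + ((n : ℤ) - k) = n + 1 by ring] at hadd
  linear_combination qbinom_succ_succ_mul n k + qbinom n k * hadd
    - q ^ (-((k : ℤ) + 1)) * qbinom_succ_mul n k

lemma qbinom_zero_right (n : ℕ) : qbinom n 0 = 1 := prod_range_zero _

lemma sum_range_succ_qbinom_mul (m : ℕ) (f : ℕ → RatFunc ℚ) :
    ∑ k ∈ range (m + 2), qbinom m k * f k = ∑ k ∈ range (m + 1), qbinom m k * f k := by
  rw [sum_range_succ, qbinom_eq_zero_of_lt (by omega), zero_mul, add_zero]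

theorem sum_qbinom_mul_pow (m : ℕ) (x : RatFunc ℚ) :
    ∑ k ∈ range (m + 1), qbinom m k * x ^ k =
      ∏ j ∈ range m, (1 + q ^ ((m : ℤ) - 1 - 2 * j) * x) := by
  induction m generalizing x with
  | zero => simp [qbinom_zero_right]
  | succ m ih =>
    -- Pascal's rule says `F_{m+1}(x) = (1 + q^m x) F_m(q⁻¹ x)`, as does the product.
    set y := q⁻¹ * x
    have hterm : ∀ k ∈ range (m + 1), qbinom (m + 1) (k + 1) * x ^ (k + 1) =
        qbinom m (k + 1) * y ^ (k + 1) + q ^ m * x * (qbinom m k * y ^ k) := by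
      intro k _
      have h1 : q ^ (-((k : ℤ) + 1)) = q⁻¹ ^ (k + 1) := by
        rw [inv_pow, ← zpow_natCast, ← zpow_neg]; push_cast; rfl
      have h2 : q ^ ((m : ℤ) - k) = q ^ m * q⁻¹ ^ k := by
        rw [zpow_sub₀ q_ne_zero, zpow_natCast, zpow_natCast, inv_pow, div_eq_mul_inv]
      rw [qbinom_succ_succ, h1, h2]
      ring
    have hshift : ∑ k ∈ range (m + 1), qbinom m (k + 1) * y ^ (k + 1) + 1 =
        ∑ k ∈ range (m + 1), qbinom m k * y ^ k := by
      rw [← sum_range_succ_qbinom_mul, sum_range_succ' _ (m + 1), qbinom_zero_right, pow_zero,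
        mul_one]
    have hfactor : ∀ j ∈ range m, 1 + q ^ (((m + 1 : ℕ) : ℤ) - 1 - 2 * ((j + 1 : ℕ) : ℤ)) * x =
        1 + q ^ ((m : ℤ) - 1 - 2 * j) * y := by
      intro j _
      rw [← mul_assoc, ← zpow_neg_one, ← zpow_add₀ q_ne_zero]
      push_cast
      ring_nf
    rw [sum_range_succ', sum_congr rfl hterm, sum_add_distrib, ← mul_sum, qbinom_zero_right,
      pow_zero, mul_one, add_right_comm, hshift, ih, prod_range_succ', prod_congr rfl hfactor]
    have hfirst : q ^ (((m + 1 : ℕ) : ℤ) - 1 - 2 * ((0 : ℕ) : ℤ)) = q ^ m := by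
      rw [← zpow_natCast]; push_cast; ring_nf
    rw [hfirst]
    ring

lemma sum_neg_one_pow_qbinom_mul_zpow (m : ℕ) (a : ℤ) :
    ∑ k ∈ range (m + 1), (-1 : RatFunc ℚ) ^ k * qbinom m k * q ^ (a * k) =
      ∏ j ∈ range m, (1 - q ^ ((m : ℤ) - 1 - 2 * j + a)) := by
  convert sum_qbinom_mul_pow m (-q ^ a) using 1
  · refine sum_congr rfl fun k _ => ?_
    rw [neg_pow, zpow_mul, zpow_natCast]
    ring
  · refine prod_congr rfl fun j _ => ?_
    rw [zpow_add₀ q_ne_zero]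
    ring

lemma geom_sum_q_zpow_mul (c : ℤ) (N : ℕ) :
    (∑ l ∈ range N, q ^ (c + 2 * (l : ℤ))) * (q ^ 2 - 1) = q ^ (c + 2 * N) - q ^ c := by
  have hpow : ∀ n : ℕ, q ^ (c + 2 * (n : ℤ)) = q ^ c * (q ^ 2) ^ n := fun n => by
    rw [zpow_add₀ q_ne_zero, ← pow_mul, ← zpow_natCast]
    push_cast
    rfl
  simp only [hpow, ← mul_sum, mul_assoc, geom_sum_mul]
  ring

lemma inner_sum_mul_q_sq_sub_one {m k : ℕ} (hk : k ≤ m) :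
    (∑ l ∈ range (m - k), q ^ (-(((m : ℤ) - 1) * k) - 2 * ((m : ℤ) - 1) + 2 * l)) * (q ^ 2 - 1) =
      q ^ 2 * q ^ (-((m : ℤ) + 1) * k) - q ^ (-(2 * ((m : ℤ) - 1))) * q ^ (-((m : ℤ) - 1) * k) := by
  have hhigh : q ^ (-(((m : ℤ) - 1) * k) - 2 * ((m : ℤ) - 1) + 2 * ((m : ℤ) - k)) =
      q ^ 2 * q ^ (-((m : ℤ) + 1) * k) := by
    rw [← zpow_natCast q 2, ← zpow_add₀ q_ne_zero]
    ring_nf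
  have hlow : q ^ (-(((m : ℤ) - 1) * k) - 2 * ((m : ℤ) - 1)) =
      q ^ (-(2 * ((m : ℤ) - 1))) * q ^ (-((m : ℤ) - 1) * k) := by
    rw [← zpow_add₀ q_ne_zero]
    ring_nf
  rw [geom_sum_q_zpow_mul, Nat.cast_sub hk, hhigh, hlow]

/-- The closed evaluation of the double sum computing the coefficient `a_j`
(equations (3.24)–(3.27)) in the proof of Theorem 3.3. -/
theorem stmt_6 (m : ℕ) (hm : 1 ≤ m) :
    ∑ k ∈ Finset.range (m + 1),
        (-1 : RatFunc ℚ) ^ k * qbinom m k *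
          (∑ l ∈ Finset.range (m - k),
            q ^ (-(((m : ℤ) - 1) * k) - 2 * ((m : ℤ) - 1) + 2 * l)) =
      q * (q - q⁻¹)⁻¹ * ∏ j ∈ Finset.range m, (1 - q ^ (-(2 * ((j : ℤ) + 1)))) := by
  have hvanish : ∏ j ∈ range m, (1 - q ^ ((m : ℤ) - 1 - 2 * j + -((m : ℤ) - 1))) = 0 :=
    prod_eq_zero (mem_range.mpr hm) (by simp)
  have hprod : ∏ j ∈ range m, (1 - q ^ ((m : ℤ) - 1 - 2 * j + -((m : ℤ) + 1))) =
      ∏ j ∈ range m, (1 - q ^ (-(2 * ((j : ℤ) + 1)))) :=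
    prod_congr rfl fun j _ => by ring_nf
  have hq2 : q ^ 2 - 1 ≠ 0 := sub_ne_zero.mpr (q_pow_ne_one two_ne_zero)
  refine mul_right_cancel₀ hq2 ?_
  calc _ = ∑ k ∈ range (m + 1),
        (q ^ 2 * ((-1) ^ k * qbinom m k * q ^ (-((m : ℤ) + 1) * k)) -
          q ^ (-(2 * ((m : ℤ) - 1))) * ((-1) ^ k * qbinom m k * q ^ (-((m : ℤ) - 1) * k))) := by
        rw [sum_mul]
        refine sum_congr rfl fun k hk => ?_
        rw [mul_assoc, inner_sum_mul_q_sq_sub_one (Nat.lt_succ_iff.mp (mem_range.mp hk))]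
        ring
    _ = q ^ 2 * ∏ j ∈ range m, (1 - q ^ (-(2 * ((j : ℤ) + 1)))) := by
        rw [sum_sub_distrib, ← mul_sum, ← mul_sum, sum_neg_one_pow_qbinom_mul_zpow,
          sum_neg_one_pow_qbinom_mul_zpow, hvanish, hprod, mul_zero, sub_zero]
    _ = _ := by
        field_simp
end

section
/- Let n and r be positive integers with 2r + 1 ≤ n. In ℚ^{n+1} with the standard inner product ⟨·,·⟩ and standard basis e_1, …, e_{n+1}, set α_i = e_i − e_{i+1} for i = 1, …, n. Let w_X : ℚ^{n+1} → ℚ^{n+1} be the linear map induced by the permutation reversing the interval {r+1, …, n−r+1}, i.e. w_X(e_j) = e_{n+2−j} for r+1 ≤ j ≤ n−r+1 and w_X(e_j) = e_j otherwise. Let t : ℚ^{n+1} → ℚ^{n+1} be the linear map with t(e_j) = −e_{n+2−j} for all j (so that t(α_i) = α_{n+1−i}), define Θ = −w_X ∘ t, and let 2ρ_X = ∑_{r+1 ≤ i < j ≤ n−r+1} (e_i − e_j). Then ⟨α_r, Θ(α_r) − 2ρ_X⟩ = n − 2r + 1. -/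
/-!
Writing `eⱼ` for the standard basis vectors, `t(α_r) = e_{n+1-r} - e_{n+2-r}`; the vector
`e_{n+2-r}` lies outside the block reversed by `w_X` while `e_{n+1-r}` is sent to `e_{r+1}`, so
`Θ(α_r) = e_{n+2-r} - e_{r+1}`. The `k`-th coordinate of `2ρ_X` for the block `[a, b]` is
`(b - k) - (k - a)`, which is `n - 2r` at `k = r + 1` and `0` at `k = r < a`. Pairing with
`α_r` reads off the difference of the `r`-th and `(r+1)`-st coordinates:
`(0 - 0) - (-1 - (n - 2r)) = n - 2r + 1`.
-/

open Finset

lemma sum_single_sub_single_mul {s : Finset ℕ} {k l : ℕ} (hk : k ∈ s) (hl : l ∈ s)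
    (v : ℕ → ℚ) :
    ∑ i ∈ s, (Pi.single k 1 - Pi.single l 1 : ℕ → ℚ) i * v i = v k - v l := by
  simp [sub_mul, sum_sub_distrib, Pi.single_apply, ite_mul, hk, hl]

def twoRhoBlock (a b : ℕ) : ℕ → ℚ :=
  ∑ i ∈ Icc a b, ∑ j ∈ Ioc i b, (Pi.single i 1 - Pi.single j 1)

lemma twoRhoBlock_apply_of_lt {a b k : ℕ} (hk : k < a) : twoRhoBlock a b k = 0 := by
  simp only [twoRhoBlock, Finset.sum_apply, Pi.sub_apply]
  refine sum_eq_zero fun i hi => sum_eq_zero fun j hj => ?_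
  simp only [mem_Icc] at hi
  simp only [mem_Ioc] at hj
  simp [show k ≠ i by omega, show k ≠ j by omega]

lemma twoRhoBlock_apply {a b k : ℕ} (hak : a ≤ k) (hkb : k ≤ b) :
    twoRhoBlock a b k = ((b : ℚ) - k) - ((k : ℚ) - a) := by
  have hlower : ((Icc a b).filter fun i => k ∈ Ioc i b) = Ico a k := by
    ext i
    simp only [mem_filter, mem_Icc, mem_Ioc, mem_Ico]
    omega
  simp only [twoRhoBlock, Finset.sum_apply, Pi.sub_apply, sum_sub_distrib, Pi.single_apply]
  simp only [sum_ite_eq, sum_const, nsmul_eq_mul, mul_ite, mul_one, mul_zero]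
  rw [if_pos (mem_Icc.2 ⟨hak, hkb⟩), sum_boole, hlower, Nat.card_Ioc, Nat.card_Ico]
  push_cast [hak, hkb]
  ring

lemma neg_comp_apply_single_sub_single {n r : ℕ} (hr : 1 ≤ r) (hn : 2 * r + 1 ≤ n)
    (wX t : (ℕ → ℚ) →ₗ[ℚ] (ℕ → ℚ))
    (hw : ∀ j, 1 ≤ j → j ≤ n + 1 → wX (Pi.single j 1) =
      if r + 1 ≤ j ∧ j ≤ n - r + 1 then Pi.single (n + 2 - j) 1 else Pi.single j 1)
    (ht : ∀ j, 1 ≤ j → j ≤ n + 1 → t (Pi.single j 1) = -Pi.single (n + 2 - j) 1) :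
    (-(wX ∘ₗ t)) (Pi.single r 1 - Pi.single (r + 1) 1)
      = Pi.single (n + 2 - r) 1 - Pi.single (r + 1) 1 := by
  have hfix : wX (Pi.single (n + 2 - r) 1) = Pi.single (n + 2 - r) 1 := by
    rw [hw _ (by omega) (by omega), if_neg (by omega)]
  have hswap : wX (Pi.single (n + 2 - (r + 1)) 1) = Pi.single (r + 1) 1 := by
    rw [hw _ (by omega) (by omega), if_pos (by omega),
      show n + 2 - (n + 2 - (r + 1)) = r + 1 by omega]
  simp only [LinearMap.neg_apply, LinearMap.comp_apply, map_sub, ht r hr (by omega),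
    ht (r + 1) (by omega) (by omega), map_neg, hfix, hswap]
  abel

/-- Example 3.9, Case I: for the symmetric pair of type AIII/IV for `sl_{n+1}` with
`X = {r+1, …, n−r}` and `τ(i) = n+1−i`, one has `⟨α_r, Θ(α_r) − 2ρ_X⟩ = n − 2r + 1`. -/
theorem stmt_8 (n r : ℕ) (hr : 1 ≤ r) (hn : 2 * r + 1 ≤ n)
    (e : ℕ → ℕ → ℚ) (he : ∀ j, e j = fun i => if i = j then (1 : ℚ) else 0)
    (ip : (ℕ → ℚ) → (ℕ → ℚ) → ℚ)
    (hip : ∀ x y, ip x y = ∑ i ∈ Finset.Icc 1 (n + 1), x i * y i)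
    (α : ℕ → ℕ → ℚ) (hα : ∀ i, α i = e i - e (i + 1))
    (wX : (ℕ → ℚ) →ₗ[ℚ] (ℕ → ℚ))
    (hw : ∀ j, 1 ≤ j → j ≤ n + 1 →
      wX (e j) = if r + 1 ≤ j ∧ j ≤ n - r + 1 then e (n + 2 - j) else e j)
    (t : (ℕ → ℚ) →ₗ[ℚ] (ℕ → ℚ))
    (ht : ∀ j, 1 ≤ j → j ≤ n + 1 → t (e j) = -(e (n + 2 - j)))
    (twoRho : ℕ → ℚ)
    (hρ : twoRho = ∑ i ∈ Finset.Icc (r + 1) (n - r + 1),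
      ∑ j ∈ Finset.Ioc i (n - r + 1), (e i - e j)) :
    ip (α r) ((-(wX ∘ₗ t)) (α r) - twoRho) = (n : ℚ) - 2 * r + 1 := by
  obtain rfl : e = fun j => Pi.single j 1 :=
    funext fun j => (he j).trans (funext fun i => (Pi.single_apply j 1 i).symm)
  have hΘ := neg_comp_apply_single_sub_single hr hn wX t hw ht
  have hρr : twoRho r = 0 := hρ ▸ twoRhoBlock_apply_of_lt (by omega)
  have hρr1 : twoRho (r + 1) = n - 2 * r := by
    rw [hρ, ← twoRhoBlock, twoRhoBlock_apply le_rfl (by omega)]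
    push_cast [Nat.cast_sub (show r ≤ n by omega)]
    ring
  rw [hip, hα, hΘ,
    sum_single_sub_single_mul (mem_Icc.2 ⟨hr, by omega⟩) (mem_Icc.2 ⟨by omega, by omega⟩)]
  simp only [Pi.sub_apply, Pi.single_apply, hρr, hρr1, if_neg (show r ≠ n + 2 - r by omega),
    if_neg (show r ≠ r + 1 by omega), if_neg (show r + 1 ≠ n + 2 - r by omega), if_true]
  ring
end
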